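/- arXiv:2208.11153 — 2 statements merged into one kernel-verified Lean document; each statement's English description precedes it below -/
import Mathlib

section
/- Let n ≥ 2, p > n, ε > 0, C_f > 0, δ > 0, and α = (p-n)/(p-1). Define v₀(r) for r ≥ 1 by v₀(r) = ∫₀¹ φ⁻¹( ( (C_f/n)(1−τⁿ) + C_f/(p−n+ε) ) τ^(−(n−1)) ) dτ + ∫₁^r φ⁻¹( (C_f/(p−n+ε)) τ^(n−p−ε) τ^(−(n−1)) ) dτ, where φ⁻¹(s) ≤ (s/δ)^(1/(p-1)). Then v₀(r) ≤ ( C_f (p+ε) / (δ n (p−n+ε)) )^(1/(p-1)) · ( 1/α + (p−1)/ε ) for all r ≥ 1. -/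
/-! Since `φ⁻¹(s) ≤ (s/δ)^(1/(p-1))`, it suffices to bound both arguments by `A τ^β` with
`A = C_f/n + C_f/(p-n+ε) = C_f(p+ε)/(n(p-n+ε))`. On `[0,1]` this gives the integrable power
`τ^(-(n-1)/(p-1))`, with integral `1/α`, and on `[1,r]` the power `τ^(-1-ε/(p-1))`, with
integral at most `(p-1)/ε`. -/

open Real Set MeasureTheory

theorem integral_rpow_zero_one {β : ℝ} (hβ : -1 < β) :
    ∫ x in (0:ℝ)..1, x ^ β = 1 / (β + 1) := by
  rw [integral_rpow (Or.inl hβ), one_rpow, zero_rpow (by linarith), sub_zero]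

theorem integral_rpow_one_le {β r : ℝ} (hβ : β < -1) (hr : 1 ≤ r) :
    ∫ x in (1:ℝ)..r, x ^ β ≤ -1 / (β + 1) := by
  have h0 : (0:ℝ) ∉ uIcc 1 r := by
    rw [uIcc_of_le hr]; exact fun h => by linarith [h.1]
  rw [integral_rpow (Or.inr ⟨hβ.ne, h0⟩), one_rpow]
  have hrβ : 0 ≤ r ^ (β + 1) := rpow_nonneg (by linarith) _
  exact div_le_div_of_nonpos_of_le (by linarith) (by linarith)

/-- A comparison that survives non-integrability of `f`, since then `∫ f = 0 ≤ C`. -/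
theorem intervalIntegral_le_of_forall_le {f g : ℝ → ℝ} {a b C : ℝ} (hab : a ≤ b)
    (hg : IntervalIntegrable g volume a b) (hfg : ∀ x ∈ Icc a b, f x ≤ g x)
    (hgC : ∫ x in a..b, g x ≤ C) (hC : 0 ≤ C) : ∫ x in a..b, f x ≤ C := by
  by_cases hf : IntervalIntegrable f volume a b
  · exact (intervalIntegral.integral_mono_on hab hf hg hfg).trans hgC
  · rwa [intervalIntegral.integral_undef hf]

section

variable {ψ : ℝ → ℝ} {δ : ℝ}

theorem le_rpow_mul_rpow_of_le_mul {c : ℝ} (hδ : 0 < δ) (hc : 0 ≤ c)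
    (hψ : ∀ s ≥ (0:ℝ), ψ s ≤ (s / δ) ^ c) {s M t β : ℝ} (hs : 0 ≤ s) (hM : 0 ≤ M)
    (ht : 0 ≤ t) (hsM : s ≤ M * t ^ β) : ψ s ≤ (M / δ) ^ c * t ^ (β * c) := by
  have htβ : 0 ≤ t ^ β := rpow_nonneg ht β
  calc ψ s ≤ (s / δ) ^ c := hψ s hs
    _ ≤ (M / δ * t ^ β) ^ c := by
      gcongr
      rwa [div_mul_eq_mul_div, div_le_div_iff_of_pos_right hδ]
    _ = (M / δ) ^ c * t ^ (β * c) := by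
      rw [mul_rpow (by positivity) htβ, rpow_mul ht]

theorem integral_core_le {n : ℕ} {p a b : ℝ} (hδ : 0 < δ) (hp : 1 < p) (hnp : (n : ℝ) < p)
    (ha : 0 ≤ a) (hb : 0 ≤ b) (hψ : ∀ s ≥ (0:ℝ), ψ s ≤ (s / δ) ^ (1 / (p - 1))) :
    ∫ τ in (0:ℝ)..1, ψ ((a * (1 - τ ^ n) + b) * τ ^ (-((n : ℝ) - 1))) ≤
      ((a + b) / δ) ^ (1 / (p - 1)) * ((p - 1) / (p - n)) := by
  have hp1 : 0 < p - 1 := by linarith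
  have hβ : -1 < -((n : ℝ) - 1) * (1 / (p - 1)) := by
    rw [neg_mul, neg_lt_neg_iff, ← div_eq_mul_one_div, div_lt_one hp1]; linarith
  refine intervalIntegral_le_of_forall_le zero_le_one
    ((intervalIntegral.intervalIntegrable_rpow' hβ).const_mul (((a + b) / δ) ^ (1 / (p - 1))))
    (fun τ ⟨hτ0, hτ1⟩ => ?_) ?_ (by positivity)
  · have hτn : τ ^ n ≤ 1 := pow_le_one₀ hτ0 hτ1
    have hτβ : 0 ≤ τ ^ (-((n : ℝ) - 1)) := rpow_nonneg hτ0 _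
    refine le_rpow_mul_rpow_of_le_mul hδ (by positivity) hψ
      (mul_nonneg (by nlinarith) hτβ) (by positivity) hτ0 ?_
    gcongr
    nlinarith [pow_nonneg hτ0 n]
  · rw [intervalIntegral.integral_const_mul, integral_rpow_zero_one hβ]
    apply le_of_eq
    congr 1
    field_simp
    ring

theorem integral_tail_le {m p ε C r : ℝ} (hδ : 0 < δ) (hp : 1 < p) (hε : 0 < ε)
    (hC : 0 ≤ C) (hψ : ∀ s ≥ (0:ℝ), ψ s ≤ (s / δ) ^ (1 / (p - 1))) (hr : 1 ≤ r) :
    ∫ τ in (1:ℝ)..r, ψ (C * τ ^ (m - p - ε) * τ ^ (-(m - 1))) ≤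
      (C / δ) ^ (1 / (p - 1)) * ((p - 1) / ε) := by
  have hp1 : 0 < p - 1 := by linarith
  have hexp : (1 - p - ε) * (1 / (p - 1)) + 1 = -(ε / (p - 1)) := by field_simp; ring
  have hβ : (1 - p - ε) * (1 / (p - 1)) < -1 := by linarith [div_pos hε hp1]
  have h0 : (0:ℝ) ∉ uIcc 1 r := by
    rw [uIcc_of_le hr]; exact fun h => by linarith [h.1]
  refine intervalIntegral_le_of_forall_le hr
    ((intervalIntegral.intervalIntegrable_rpow (r := (1 - p - ε) * (1 / (p - 1)))
      (Or.inr h0)).const_mul ((C / δ) ^ (1 / (p - 1))))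
    (fun τ ⟨hτ1, _⟩ => ?_) ?_ (by positivity)
  · have hτ0 : 0 < τ := by linarith
    have hcollect : C * τ ^ (m - p - ε) * τ ^ (-(m - 1)) = C * τ ^ (1 - p - ε) := by
      rw [mul_assoc, ← rpow_add hτ0]; ring_nf
    rw [hcollect]
    exact le_rpow_mul_rpow_of_le_mul hδ (by positivity) hψ (by positivity) hC hτ0.le le_rfl
  · rw [intervalIntegral.integral_const_mul]
    gcongr
    refine (integral_rpow_one_le hβ hr).trans (le_of_eq ?_)
    rw [hexp, div_neg, neg_div, neg_neg, one_div_div]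

end

theorem stmt2 (n : ℕ) (p ε Cf δ α : ℝ) (ψ : ℝ → ℝ)
    (hn : 2 ≤ n) (hp : (n : ℝ) < p) (hε : 0 < ε) (hCf : 0 < Cf) (hδ : 0 < δ)
    (hα : α = (p - n) / (p - 1))
    (hψ : ∀ s ≥ (0:ℝ), ψ s ≤ (s / δ) ^ (1 / (p - 1))) :
    ∀ r ≥ (1:ℝ),
      (∫ τ in (0:ℝ)..1,
          ψ ((Cf / n * (1 - τ ^ n) + Cf / (p - n + ε)) * τ ^ (-((n : ℝ) - 1)))) +
      (∫ τ in (1:ℝ)..r,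
          ψ (Cf / (p - n + ε) * τ ^ ((n : ℝ) - p - ε) * τ ^ (-((n : ℝ) - 1)))) ≤
      (Cf * (p + ε) / (δ * n * (p - n + ε))) ^ (1 / (p - 1)) * (1 / α + (p - 1) / ε) := by
  intro r hr
  have hn0 : (0:ℝ) < n := by exact_mod_cast (by omega : 0 < n)
  have hp1 : 1 < p := by
    have : (2:ℝ) ≤ n := by exact_mod_cast hn
    linarith
  have hpnε : 0 < p - n + ε := by linarith
  have hbase : Cf * (p + ε) / (δ * n * (p - n + ε)) = (Cf / n + Cf / (p - n + ε)) / δ := by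
    field_simp; ring
  have htail_const : (Cf / (p - n + ε) / δ) ^ (1 / (p - 1)) ≤
      ((Cf / n + Cf / (p - n + ε)) / δ) ^ (1 / (p - 1)) := by
    gcongr
    exact le_add_of_nonneg_left (by positivity)
  have hcore := integral_core_le hδ hp1 hp (div_nonneg hCf.le hn0.le)
    (div_nonneg hCf.le hpnε.le) hψ
  have htail := integral_tail_le (m := n) hδ hp1 hε (div_nonneg hCf.le hpnε.le) hψ hr
  rw [hbase, hα, one_div_div, mul_add]
  exact add_le_add hcore (htail.trans (by gcongr))
end

section
/- Let 1 < p ≤ n, θ ∈ (0,1), and s = n/(p−θ). For measurable f on a set A ⊂ ℝⁿ of finite measure with f ∈ L^s(A), with f^♯ its Schwarz symmetrization, one has ∫_0^1 ρ^(−(n−1)/(p−1)) ( ∫_{B_ρ} f^♯(x) dx )^(1/(p−1)) dρ ≤ ω_n^(1/(s'(p−1))) · ( s(p−1)/(sp−n) ) · ‖f‖_{L^s(A)}^(1/(p−1)), where s' = s/(s−1). -/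
/-!
Every superlevel set `{f^♯ > t}` lies in a centred ball of volume `|{|f| > t} ∩ A|`, so the
layer-cake formula gives `‖f^♯‖_s ≤ ‖f‖_{L^s(A)}`. Hölder's inequality on `B_ρ` then bounds
`∫_{B_ρ} f^♯` by `‖f‖_s (ω_n ρ^n)^{1/s'}`, so the integrand is at most
`(‖f‖_s ω_n^{1/s'})^{1/(p-1)} ρ^{(1 - n/s)/(p-1)}`. Since `sp > n` this power of `ρ` is integrable
on `(0,1)`, with integral `s(p-1)/(sp-n)`.
-/

open Real Set MeasureTheory

/-- Schwarz (spherically symmetric decreasing) rearrangement of `|f|·1_A`. -/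
noncomputable def schwarzSymm (n : ℕ) (A : Set (EuclideanSpace ℝ (Fin n)))
    (f : EuclideanSpace ℝ (Fin n) → ℝ) (x : EuclideanSpace ℝ (Fin n)) : ℝ :=
  sSup {t : ℝ | 0 ≤ t ∧
    (volume (Metric.ball (0 : EuclideanSpace ℝ (Fin n)) 1)).toReal * ‖x‖ ^ n ≤
      (volume {y ∈ A | t < |f y|}).toReal}

open scoped ENNReal
open Metric

theorem rpow_mul_rpow_le_of_le_mul_rpow {ρ X K m a q : ℝ} (hρ : 0 < ρ) (hX : 0 ≤ X)
    (hK : 0 ≤ K) (hq : 0 ≤ q) (h : X ≤ K * ρ ^ m) :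
    ρ ^ a * X ^ q ≤ K ^ q * ρ ^ (a + m * q) := by
  calc ρ ^ a * X ^ q ≤ ρ ^ a * (K * ρ ^ m) ^ q := by gcongr
    _ = K ^ q * ρ ^ (a + m * q) := by
      rw [Real.mul_rpow hK (by positivity), ← Real.rpow_mul hρ.le, Real.rpow_add hρ]
      ring

theorem intervalIntegral_le_div_of_le_mul_rpow {g : ℝ → ℝ} {K α : ℝ} (hα : -1 < α)
    (hg : AEStronglyMeasurable g (volume.restrict (Ioc 0 1)))
    (hg0 : ∀ ρ ∈ Ioc (0 : ℝ) 1, 0 ≤ g ρ) (hgK : ∀ ρ ∈ Ioc (0 : ℝ) 1, g ρ ≤ K * ρ ^ α) :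
    ∫ ρ in (0 : ℝ)..1, g ρ ≤ K / (α + 1) := by
  have hbound : IntervalIntegrable (fun ρ => K * ρ ^ α) volume 0 1 :=
    (intervalIntegral.intervalIntegrable_rpow' hα).const_mul K
  have hgint : IntervalIntegrable g volume 0 1 := by
    refine hbound.mono_fun (by rwa [uIoc_of_le zero_le_one]) ?_
    rw [uIoc_of_le zero_le_one]
    filter_upwards [ae_restrict_mem measurableSet_Ioc] with ρ hρ
    rw [Real.norm_of_nonneg (hg0 ρ hρ)]
    exact (hgK ρ hρ).trans (le_abs_self _)
  calc ∫ ρ in (0 : ℝ)..1, g ρ ≤ ∫ ρ in (0 : ℝ)..1, K * ρ ^ α :=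
        intervalIntegral.integral_mono_on_of_le_Ioo zero_le_one hgint hbound
          fun ρ hρ => hgK ρ (Ioo_subset_Ioc_self hρ)
    _ = K / (α + 1) := by
      rw [intervalIntegral.integral_const_mul, integral_rpow (Or.inl hα), Real.one_rpow,
        Real.zero_rpow (by linarith), sub_zero, mul_one_div]

namespace SchwarzSymm

variable {n : ℕ} {A : Set (EuclideanSpace ℝ (Fin n))} {f : EuclideanSpace ℝ (Fin n) → ℝ}
  {s t : ℝ} {x : EuclideanSpace ℝ (Fin n)}

noncomputable def unitBallVolume (n : ℕ) : ℝ :=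
  (volume (ball (0 : EuclideanSpace ℝ (Fin n)) 1)).toReal

noncomputable def distribution (A : Set (EuclideanSpace ℝ (Fin n)))
    (f : EuclideanSpace ℝ (Fin n) → ℝ) (t : ℝ) : ℝ≥0∞ :=
  volume {y ∈ A | t < |f y|}

def levels (A : Set (EuclideanSpace ℝ (Fin n))) (f : EuclideanSpace ℝ (Fin n) → ℝ)
    (x : EuclideanSpace ℝ (Fin n)) : Set ℝ :=
  {t | 0 ≤ t ∧ unitBallVolume n * ‖x‖ ^ n ≤ (distribution A f t).toReal}

theorem schwarzSymm_eq_sSup_levels : schwarzSymm n A f x = sSup (levels A f x) := rfl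

theorem schwarzSymm_nonneg (x : EuclideanSpace ℝ (Fin n)) : 0 ≤ schwarzSymm n A f x :=
  Real.sSup_nonneg fun _ ht => ht.1

theorem unitBallVolume_pos : 0 < unitBallVolume n :=
  ENNReal.toReal_pos (measure_ball_pos _ _ one_pos).ne' measure_ball_lt_top.ne

theorem distribution_antitone : Antitone (distribution A f) :=
  fun _ _ h => measure_mono fun _ hy => ⟨hy.1, h.trans_lt hy.2⟩

theorem distribution_ne_top (hA : volume A ≠ ⊤) (t : ℝ) : distribution A f t ≠ ⊤ :=
  ne_top_of_le_ne_top hA (measure_mono (sep_subset _ _))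

theorem distribution_eq_restrict (hf : Measurable f) (t : ℝ) :
    distribution A f t = volume.restrict A {y | t < |f y|} := by
  rw [Measure.restrict_apply (measurableSet_lt measurable_const hf.abs), inter_comm]
  rfl

theorem rpow_mul_distribution_le (hf : Measurable f) (hs : 0 ≤ s) (ht : 0 ≤ t) :
    ENNReal.ofReal (t ^ s) * distribution A f t ≤ ∫⁻ y in A, ENNReal.ofReal (|f y| ^ s) := by
  rw [distribution_eq_restrict hf]
  refine le_trans (mul_le_mul_right (measure_mono fun y (hy : t < |f y|) => ?_) _)
    (mul_meas_ge_le_lintegral₀ (hf.abs.pow_const s).ennreal_ofReal.aemeasurable _)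
  exact ENNReal.ofReal_le_ofReal (Real.rpow_le_rpow ht hy.le hs)

theorem bddAbove_levels (hf : Measurable f) (hs : 0 < s)
    (hfs : IntegrableOn (fun y => |f y| ^ s) A) (hx : x ≠ 0) : BddAbove (levels A f x) := by
  set J := ∫⁻ y in A, ENNReal.ofReal (|f y| ^ s)
  have hJ : J ≠ ⊤ := hfs.lintegral_lt_top.ne
  have hc : 0 < unitBallVolume n * ‖x‖ ^ n :=
    mul_pos unitBallVolume_pos (pow_pos (norm_pos_iff.mpr hx) n)
  refine ⟨(J.toReal / (unitBallVolume n * ‖x‖ ^ n)) ^ s⁻¹, fun t ⟨ht, hlevel⟩ => ?_⟩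
  have hmarkov : ENNReal.ofReal (t ^ s * (unitBallVolume n * ‖x‖ ^ n)) ≤ J := by
    rw [ENNReal.ofReal_mul (Real.rpow_nonneg ht s)]
    refine le_trans ?_ (rpow_mul_distribution_le hf hs.le ht)
    gcongr
    exact (ENNReal.ofReal_le_ofReal hlevel).trans ENNReal.ofReal_toReal_le
  have hts : t ^ s ≤ J.toReal / (unitBallVolume n * ‖x‖ ^ n) :=
    (le_div_iff₀ hc).mpr ((ENNReal.ofReal_le_iff_le_toReal hJ).mp hmarkov)
  exact (Real.le_rpow_inv_iff_of_pos ht (by positivity) hs).mpr hts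

theorem exists_mem_levels_lt (ht : 0 ≤ t) (h : t < schwarzSymm n A f x) :
    ∃ t' ∈ levels A f x, t < t' := by
  refine exists_lt_of_lt_csSup (nonempty_iff_ne_empty.mpr fun he => ?_) h
  rw [schwarzSymm_eq_sSup_levels, he, Real.sSup_empty] at h
  linarith

theorem setOf_lt_schwarzSymm (hn : n ≠ 0) (hA : volume A ≠ ⊤) (hf : Measurable f) (hs : 0 < s)
    (hfs : IntegrableOn (fun y => |f y| ^ s) A) (ht : 0 ≤ t) :
    {x | t < schwarzSymm n A f x} = {0}ᶜ ∩ ⋃ q : ℚ,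
      {x | t < q ∧ unitBallVolume n * ‖x‖ ^ n ≤ (distribution A f q).toReal} := by
  ext x
  simp only [mem_ofPred_eq, mem_inter_iff, mem_compl_iff, mem_singleton_iff, mem_iUnion]
  constructor
  · intro hx
    have hx0 : x ≠ 0 := by
      -- every `t ≥ 0` is a level of `0`, and `sSup` of an unbounded set of reals is `0`
      rintro rfl
      have hunbdd : ¬BddAbove (levels A f 0) := by
        refine (not_bddAbove_Ici (a := (0 : ℝ))).imp fun hbdd => hbdd.mono fun u hu => ?_
        exact ⟨hu, by simp [norm_zero, zero_pow hn]⟩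
      rw [schwarzSymm_eq_sSup_levels, Real.sSup_of_not_bddAbove hunbdd] at hx
      linarith
    obtain ⟨t', ht', htt'⟩ := exists_mem_levels_lt ht hx
    obtain ⟨q, htq, hqt'⟩ := exists_rat_btwn htt'
    exact ⟨hx0, q, htq, ht'.2.trans
      (ENNReal.toReal_mono (distribution_ne_top hA _) (distribution_antitone hqt'.le))⟩
  · rintro ⟨hx0, q, htq, hq⟩
    exact htq.trans_le (le_csSup (bddAbove_levels hf hs hfs hx0) ⟨ht.trans htq.le, hq⟩)

theorem measurable_schwarzSymm (hn : n ≠ 0) (hA : volume A ≠ ⊤) (hf : Measurable f) (hs : 0 < s)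
    (hfs : IntegrableOn (fun y => |f y| ^ s) A) : Measurable (schwarzSymm n A f) := by
  refine measurable_of_Ioi fun t => ?_
  change MeasurableSet {x | t < schwarzSymm n A f x}
  rcases lt_or_ge t 0 with ht | ht
  · rw [eq_univ_of_forall fun x => show x ∈ {x | t < schwarzSymm n A f x} from
      ht.trans_le (schwarzSymm_nonneg x)]
    exact MeasurableSet.univ
  · rw [setOf_lt_schwarzSymm hn hA hf hs hfs ht]
    refine (measurableSet_singleton 0).compl.inter (.iUnion fun q => ?_)
    exact (MeasurableSet.const _).inter (measurableSet_le
      (measurable_const.mul (measurable_norm.pow_const n)) measurable_const)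

theorem volume_setOf_mul_norm_pow_le (hn : n ≠ 0) {c : ℝ} (hc : 0 ≤ c) :
    volume {x : EuclideanSpace ℝ (Fin n) | unitBallVolume n * ‖x‖ ^ n ≤ c} = ENNReal.ofReal c := by
  have hω := unitBallVolume_pos (n := n)
  have hR : 0 ≤ c / unitBallVolume n := div_nonneg hc hω.le
  have hball : {x : EuclideanSpace ℝ (Fin n) | unitBallVolume n * ‖x‖ ^ n ≤ c} =
      closedBall 0 ((c / unitBallVolume n) ^ (n : ℝ)⁻¹) := by
    ext x
    rw [mem_ofPred_eq, mem_closedBall_zero_iff, Real.le_rpow_inv_iff_of_pos (norm_nonneg x) hR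
      (Nat.cast_pos.mpr (Nat.pos_of_ne_zero hn)), Real.rpow_natCast, le_div_iff₀ hω, mul_comm]
  rw [hball, Measure.addHaar_closedBall _ _ (by positivity), finrank_euclideanSpace_fin,
    ← Real.rpow_natCast, ← Real.rpow_mul hR, inv_mul_cancel₀ (Nat.cast_ne_zero.mpr hn),
    Real.rpow_one, ENNReal.ofReal_div_of_pos hω, unitBallVolume,
    ENNReal.ofReal_toReal measure_ball_lt_top.ne,
    ENNReal.div_mul_cancel (measure_ball_pos _ _ one_pos).ne' measure_ball_lt_top.ne]

theorem volume_setOf_lt_schwarzSymm_le (hn : n ≠ 0) (hA : volume A ≠ ⊤) (ht : 0 ≤ t) :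
    volume {x | t < schwarzSymm n A f x} ≤ distribution A f t := by
  calc volume {x | t < schwarzSymm n A f x}
      ≤ volume {x : EuclideanSpace ℝ (Fin n) |
          unitBallVolume n * ‖x‖ ^ n ≤ (distribution A f t).toReal} := by
        refine measure_mono fun x hx => ?_
        obtain ⟨t', ht', htt'⟩ := exists_mem_levels_lt ht hx
        exact ht'.2.trans
          (ENNReal.toReal_mono (distribution_ne_top hA t) (distribution_antitone htt'.le))
    _ = ENNReal.ofReal (distribution A f t).toReal :=
        volume_setOf_mul_norm_pow_le hn ENNReal.toReal_nonneg
    _ ≤ distribution A f t := ENNReal.ofReal_toReal_le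

theorem lintegral_schwarzSymm_rpow_le (hn : n ≠ 0) (hA : volume A ≠ ⊤) (hf : Measurable f)
    (hs : 0 < s) (hfs : IntegrableOn (fun y => |f y| ^ s) A) :
    ∫⁻ x, ENNReal.ofReal (schwarzSymm n A f x ^ s) ≤
      ∫⁻ y in A, ENNReal.ofReal (|f y| ^ s) := by
  rw [lintegral_rpow_eq_lintegral_meas_lt_mul volume (ae_of_all _ schwarzSymm_nonneg)
      (measurable_schwarzSymm hn hA hf hs hfs).aemeasurable hs,
    lintegral_rpow_eq_lintegral_meas_lt_mul (volume.restrict A)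
      (ae_of_all _ fun y => abs_nonneg (f y)) hf.abs.aemeasurable hs]
  refine mul_le_mul_right (setLIntegral_mono' measurableSet_Ioi fun t (ht : 0 < t) => ?_) _
  rw [← distribution_eq_restrict hf]
  gcongr
  exact volume_setOf_lt_schwarzSymm_le hn hA ht.le

variable {s' : ℝ}

theorem lintegral_schwarzSymm_le (hn : n ≠ 0) (hA : volume A ≠ ⊤) (hf : Measurable f)
    (hss' : s.HolderConjugate s') (hfs : IntegrableOn (fun y => |f y| ^ s) A)
    (B : Set (EuclideanSpace ℝ (Fin n))) :
    ∫⁻ x in B, ENNReal.ofReal (schwarzSymm n A f x) ≤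
      (∫⁻ y in A, ENNReal.ofReal (|f y| ^ s)) ^ (1 / s) * volume B ^ (1 / s') := by
  have hholder := ENNReal.lintegral_mul_le_Lp_mul_Lq (volume.restrict B) hss'
    (measurable_schwarzSymm hn hA hf hss'.pos hfs).ennreal_ofReal.aemeasurable
    (aemeasurable_const (b := (1 : ℝ≥0∞)))
  simp only [Pi.mul_apply, mul_one, ENNReal.one_rpow, setLIntegral_one] at hholder
  refine hholder.trans
    (mul_le_mul_left (ENNReal.rpow_le_rpow ?_ (one_div_nonneg.mpr hss'.nonneg)) _)
  calc ∫⁻ x in B, ENNReal.ofReal (schwarzSymm n A f x) ^ s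
      = ∫⁻ x in B, ENNReal.ofReal (schwarzSymm n A f x ^ s) :=
        lintegral_congr fun x => ENNReal.ofReal_rpow_of_nonneg (schwarzSymm_nonneg x) hss'.nonneg
    _ ≤ ∫⁻ x, ENNReal.ofReal (schwarzSymm n A f x ^ s) := setLIntegral_le_lintegral _ _
    _ ≤ ∫⁻ y in A, ENNReal.ofReal (|f y| ^ s) :=
        lintegral_schwarzSymm_rpow_le hn hA hf hss'.pos hfs

theorem lintegral_schwarzSymm_lt_top (hn : n ≠ 0) (hA : volume A ≠ ⊤) (hf : Measurable f)
    (hss' : s.HolderConjugate s') (hfs : IntegrableOn (fun y => |f y| ^ s) A)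
    {B : Set (EuclideanSpace ℝ (Fin n))} (hB : volume B ≠ ⊤) :
    ∫⁻ x in B, ENNReal.ofReal (schwarzSymm n A f x) < ⊤ :=
  (lintegral_schwarzSymm_le hn hA hf hss' hfs B).trans_lt <| ENNReal.mul_lt_top
    (ENNReal.rpow_lt_top_of_nonneg (one_div_nonneg.mpr hss'.nonneg) hfs.lintegral_lt_top.ne)
    (ENNReal.rpow_lt_top_of_nonneg (one_div_nonneg.mpr hss'.symm.nonneg) hB)

theorem integrableOn_schwarzSymm (hn : n ≠ 0) (hA : volume A ≠ ⊤) (hf : Measurable f)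
    (hss' : s.HolderConjugate s') (hfs : IntegrableOn (fun y => |f y| ^ s) A)
    {B : Set (EuclideanSpace ℝ (Fin n))} (hB : volume B ≠ ⊤) :
    IntegrableOn (schwarzSymm n A f) B :=
  ⟨(measurable_schwarzSymm hn hA hf hss'.pos hfs).aestronglyMeasurable,
    (hasFiniteIntegral_iff_ofReal (ae_of_all _ schwarzSymm_nonneg)).mpr
      (lintegral_schwarzSymm_lt_top hn hA hf hss' hfs hB)⟩

theorem setIntegral_schwarzSymm_le (hn : n ≠ 0) (hA : volume A ≠ ⊤) (hf : Measurable f)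
    (hss' : s.HolderConjugate s') (hfs : IntegrableOn (fun y => |f y| ^ s) A)
    {B : Set (EuclideanSpace ℝ (Fin n))} (hB : volume B ≠ ⊤) :
    ∫ x in B, schwarzSymm n A f x ≤
      (∫ y in A, |f y| ^ s) ^ (1 / s) * (volume B).toReal ^ (1 / s') := by
  have hI : ∫⁻ y in A, ENNReal.ofReal (|f y| ^ s) = ENNReal.ofReal (∫ y in A, |f y| ^ s) :=
    (ofReal_integral_eq_lintegral_ofReal hfs (ae_of_all _ fun y => by positivity)).symm
  rw [integral_eq_lintegral_of_nonneg_ae (ae_of_all _ schwarzSymm_nonneg)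
    (measurable_schwarzSymm hn hA hf hss'.pos hfs).aestronglyMeasurable]
  refine ENNReal.toReal_le_of_le_ofReal (by positivity)
    ((lintegral_schwarzSymm_le hn hA hf hss' hfs B).trans_eq ?_)
  rw [hI, ENNReal.ofReal_mul (by positivity),
    ENNReal.ofReal_rpow_of_nonneg (by positivity) (one_div_nonneg.mpr hss'.nonneg),
    ← ENNReal.ofReal_rpow_of_nonneg ENNReal.toReal_nonneg (one_div_nonneg.mpr hss'.symm.nonneg),
    ENNReal.ofReal_toReal hB]

theorem toReal_volume_ball_le {ρ : ℝ} (hρ : 0 ≤ ρ) :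
    (volume (ball (0 : EuclideanSpace ℝ (Fin n)) ρ)).toReal ≤ unitBallVolume n * ρ ^ n := by
  refine ENNReal.toReal_le_of_le_ofReal (mul_nonneg unitBallVolume_pos.le (pow_nonneg hρ n)) ?_
  calc volume (ball (0 : EuclideanSpace ℝ (Fin n)) ρ)
      ≤ volume (closedBall (0 : EuclideanSpace ℝ (Fin n)) ρ) := measure_mono ball_subset_closedBall
    _ = ENNReal.ofReal (unitBallVolume n * ρ ^ n) := by
        rw [Measure.addHaar_closedBall _ _ hρ, finrank_euclideanSpace_fin, mul_comm,
          ENNReal.ofReal_mul unitBallVolume_pos.le, unitBallVolume,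
          ENNReal.ofReal_toReal measure_ball_lt_top.ne]

theorem integral_ball_schwarzSymm_le (hn : n ≠ 0) (hA : volume A ≠ ⊤) (hf : Measurable f)
    (hss' : s.HolderConjugate s') (hfs : IntegrableOn (fun y => |f y| ^ s) A) {ρ : ℝ}
    (hρ : 0 ≤ ρ) :
    ∫ x in ball 0 ρ, schwarzSymm n A f x ≤
      (∫ y in A, |f y| ^ s) ^ (1 / s) * unitBallVolume n ^ (1 / s') * ρ ^ (n / s') := by
  have hs' : 0 ≤ 1 / s' := one_div_nonneg.mpr hss'.symm.nonneg
  calc ∫ x in ball 0 ρ, schwarzSymm n A f x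
      ≤ (∫ y in A, |f y| ^ s) ^ (1 / s) *
          (volume (ball (0 : EuclideanSpace ℝ (Fin n)) ρ)).toReal ^ (1 / s') :=
        setIntegral_schwarzSymm_le hn hA hf hss' hfs measure_ball_lt_top.ne
    _ ≤ (∫ y in A, |f y| ^ s) ^ (1 / s) * (unitBallVolume n * ρ ^ n) ^ (1 / s') := by
        gcongr
        exact toReal_volume_ball_le hρ
    _ = (∫ y in A, |f y| ^ s) ^ (1 / s) * unitBallVolume n ^ (1 / s') * ρ ^ (n / s') := by
        rw [Real.mul_rpow unitBallVolume_pos.le (by positivity), ← Real.rpow_natCast,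
          ← Real.rpow_mul hρ, mul_one_div, mul_assoc]

theorem monotone_integral_ball_schwarzSymm (hn : n ≠ 0) (hA : volume A ≠ ⊤) (hf : Measurable f)
    (hss' : s.HolderConjugate s') (hfs : IntegrableOn (fun y => |f y| ^ s) A) :
    Monotone fun ρ => ∫ x in ball 0 ρ, schwarzSymm n A f x := fun _ _ hρ =>
  setIntegral_mono_set (integrableOn_schwarzSymm hn hA hf hss' hfs measure_ball_lt_top.ne)
    (ae_of_all _ schwarzSymm_nonneg) (ball_subset_ball hρ).eventuallyLE

theorem rpow_mul_integral_ball_schwarzSymm_le (hn : n ≠ 0) (hA : volume A ≠ ⊤)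
    (hf : Measurable f) (hss' : s.HolderConjugate s') (hfs : IntegrableOn (fun y => |f y| ^ s) A)
    {p ρ : ℝ} (hp : 1 < p) (hρ : 0 < ρ) :
    ρ ^ (-((n : ℝ) - 1) / (p - 1)) * (∫ x in ball 0 ρ, schwarzSymm n A f x) ^ (1 / (p - 1)) ≤
      ((∫ y in A, |f y| ^ s) ^ (1 / s) * unitBallVolume n ^ (1 / s')) ^ (1 / (p - 1)) *
        ρ ^ ((1 - n / s) / (p - 1)) := by
  convert rpow_mul_rpow_le_of_le_mul_rpow hρ (integral_nonneg fun x => schwarzSymm_nonneg x)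
    (mul_nonneg (by positivity) (Real.rpow_nonneg unitBallVolume_pos.le _))
    (one_div_nonneg.mpr (sub_pos.mpr hp).le)
    (integral_ball_schwarzSymm_le hn hA hf hss' hfs hρ.le) using 3
  rw [div_eq_mul_inv (n : ℝ) s', eq_sub_of_add_eq' hss'.inv_add_inv_eq_one]
  ring

theorem intervalIntegral_rpow_mul_integral_ball_schwarzSymm_le (hn : n ≠ 0)
    (hA : volume A ≠ ⊤) (hf : Measurable f) (hss' : s.HolderConjugate s')
    (hfs : IntegrableOn (fun y => |f y| ^ s) A) {p : ℝ} (hp : 1 < p) (hsp : n < s * p) :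
    ∫ ρ in (0 : ℝ)..1,
        ρ ^ (-((n : ℝ) - 1) / (p - 1)) * (∫ x in ball 0 ρ, schwarzSymm n A f x) ^ (1 / (p - 1)) ≤
      unitBallVolume n ^ (1 / (s' * (p - 1))) * (s * (p - 1) / (s * p - n)) *
        ((∫ y in A, |f y| ^ s) ^ (1 / s)) ^ (1 / (p - 1)) := by
  have hp1 : 0 < p - 1 := sub_pos.mpr hp
  have hs : 0 < s := hss'.pos
  have hmeas : Measurable fun ρ : ℝ => ρ ^ (-((n : ℝ) - 1) / (p - 1)) *
      (∫ x in ball 0 ρ, schwarzSymm n A f x) ^ (1 / (p - 1)) :=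
    (measurable_id.pow_const _).mul <|
      (monotone_integral_ball_schwarzSymm hn hA hf hss' hfs).measurable.pow_const _
  have hα : (1 - n / s) / (p - 1) + 1 = (s * p - n) / (s * (p - 1)) := by
    field_simp
    ring
  have hα_pos : 0 < (s * p - n) / (s * (p - 1)) := div_pos (by linarith) (by positivity)
  calc _ ≤ ((∫ y in A, |f y| ^ s) ^ (1 / s) * unitBallVolume n ^ (1 / s')) ^ (1 / (p - 1)) /
        ((1 - n / s) / (p - 1) + 1) :=
        intervalIntegral_le_div_of_le_mul_rpow
          (by linarith)
          hmeas.aestronglyMeasurable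
          (fun ρ hρ => mul_nonneg (Real.rpow_nonneg hρ.1.le _)
            (Real.rpow_nonneg (integral_nonneg fun x => schwarzSymm_nonneg x) _))
          fun ρ hρ => rpow_mul_integral_ball_schwarzSymm_le hn hA hf hss' hfs hp hρ.1
    _ = _ := by
      rw [hα, Real.mul_rpow (by positivity) (Real.rpow_nonneg unitBallVolume_pos.le _),
        ← Real.rpow_mul unitBallVolume_pos.le, one_div_mul_one_div]
      field_simp

end SchwarzSymm

theorem stmt12_general (n : ℕ) (p θ s s' : ℝ) (A : Set (EuclideanSpace ℝ (Fin n)))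
    (f : EuclideanSpace ℝ (Fin n) → ℝ)
    (hn : 2 ≤ n) (hp1 : 1 < p) (hpn : p ≤ n) (hθ0 : 0 < θ) (hθ1 : θ < 1)
    (hs : s = (n : ℝ) / (p - θ)) (hs' : s' = s / (s - 1))
    (hAfin : volume A ≠ ⊤)
    (hf : Measurable f)
    (hfL : IntegrableOn (fun x => |f x| ^ s) A volume) :
    (∫ ρ in (0:ℝ)..1,
        ρ ^ (-((n : ℝ) - 1) / (p - 1)) *
          (∫ x in Metric.ball (0 : EuclideanSpace ℝ (Fin n)) ρ, schwarzSymm n A f x) ^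
            (1 / (p - 1))) ≤
      (volume (Metric.ball (0 : EuclideanSpace ℝ (Fin n)) 1)).toReal ^ (1 / (s' * (p - 1))) *
        (s * (p - 1) / (s * p - n)) * ((∫ x in A, |f x| ^ s) ^ (1 / s)) ^ (1 / (p - 1)) := by
  have hpθ : 0 < p - θ := by linarith
  have hs1 : 1 < s := by rw [hs, lt_div_iff₀ hpθ]; linarith
  have hsp : (n : ℝ) < s * p := by
    rw [hs, div_mul_eq_mul_div, lt_div_iff₀ hpθ]
    nlinarith
  exact SchwarzSymm.intervalIntegral_rpow_mul_integral_ball_schwarzSymm_le (by omega) hAfin hf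
    (hs' ▸ Real.HolderConjugate.conjExponent hs1) hfL hp1 hsp

theorem stmt12 (n : ℕ) (p θ s s' : ℝ) (A : Set (EuclideanSpace ℝ (Fin n)))
    (f : EuclideanSpace ℝ (Fin n) → ℝ)
    (hn : 2 ≤ n) (hp1 : 1 < p) (hpn : p ≤ n) (hθ0 : 0 < θ) (hθ1 : θ < 1)
    (hs : s = (n : ℝ) / (p - θ)) (hs' : s' = s / (s - 1))
    (hA : MeasurableSet A) (hAfin : volume A ≠ ⊤)
    (hf : Measurable f)
    (hfL : IntegrableOn (fun x => |f x| ^ s) A volume) :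
    (∫ ρ in (0:ℝ)..1,
        ρ ^ (-((n : ℝ) - 1) / (p - 1)) *
          (∫ x in Metric.ball (0 : EuclideanSpace ℝ (Fin n)) ρ, schwarzSymm n A f x) ^
            (1 / (p - 1))) ≤
      (volume (Metric.ball (0 : EuclideanSpace ℝ (Fin n)) 1)).toReal ^ (1 / (s' * (p - 1))) *
        (s * (p - 1) / (s * p - n)) * ((∫ x in A, |f x| ^ s) ^ (1 / s)) ^ (1 / (p - 1)) :=
  stmt12_general n p θ s s' A f hn hp1 hpn hθ0 hθ1 hs hs' hAfin hf hfL
end
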